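/- With σ(u₁,u₃) = u₁³/3 − u₃ and ℘ functions as above, let φ = ℘₁₁℘₁₃₃ − ℘₁₃℘₁₁₃ + ℘₃₃₃, φ₁ = ∂₁φ, φ₁₁ = ∂₁φ₁, and let ℘₁₁(2u) be obtained by substituting 2u into ℘₁₁. Then on the set where σ(u) ≠ 0, σ(2u) ≠ 0, and φ(u) ≠ 0, the duplication formula ℘₁₁(2u) = ℘₁₁(u) + (φ₁(u)² − φ(u)φ₁₁(u))/(4φ(u)²) holds. -/

import Mathlib

noncomputable section

def σr (u₁ u₃ : ℂ) : ℂ := u₁ ^ 3 / 3 - u₃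
def P11 (u₁ u₃ : ℂ) : ℂ := (u₁ ^ 4 / 3 + 2 * u₁ * u₃) / (σr u₁ u₃) ^ 2
def P13 (u₁ u₃ : ℂ) : ℂ := -u₁ ^ 2 / (σr u₁ u₃) ^ 2
def P33 (u₁ u₃ : ℂ) : ℂ := 1 / (σr u₁ u₃) ^ 2
def P113 (u₁ u₃ : ℂ) : ℂ := deriv (fun y => P11 u₁ y) u₃
def P133 (u₁ u₃ : ℂ) : ℂ := deriv (fun y => P13 u₁ y) u₃
def P333 (u₁ u₃ : ℂ) : ℂ := deriv (fun y => P33 u₁ y) u₃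
def Φ (u₁ u₃ : ℂ) : ℂ :=
  P11 u₁ u₃ * P133 u₁ u₃ - P13 u₁ u₃ * P113 u₁ u₃ + P333 u₁ u₃
def Φ1 (u₁ u₃ : ℂ) : ℂ := deriv (fun x => Φ x u₃) u₁
def Φ11 (u₁ u₃ : ℂ) : ℂ := deriv (fun x => Φ1 x u₃) u₁

/-! Every quantity is a rational function of `u₁` and `σ`; the closed forms below are
`Φ = 2(u₁³ + σ)/σ⁴`, `Φ₁ = -8u₁⁵/σ⁵`, `Φ₁₁ = 40u₁⁴(u₁³ - σ)/σ⁶`, after which the duplication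
formula is an identity of rational functions. -/

open Topology

section ClosedForms

variable {u₁ u₃ : ℂ}

theorem hasDerivAt_σr_fst : HasDerivAt (fun x => σr x u₃) (u₁ ^ 2) u₁ := by
  simpa [σr] using ((hasDerivAt_pow 3 u₁).div_const 3).sub_const u₃

theorem hasDerivAt_σr_snd : HasDerivAt (fun y => σr u₁ y) (-1) u₃ := by
  simpa [σr] using (hasDerivAt_id u₃).const_sub (u₁ ^ 3 / 3)

theorem eventually_σr_ne_zero_fst (h : σr u₁ u₃ ≠ 0) : ∀ᶠ x in 𝓝 u₁, σr x u₃ ≠ 0 :=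
  hasDerivAt_σr_fst.continuousAt.eventually_ne h

theorem deriv_div_σr_sq_snd {f : ℂ → ℂ} {f' : ℂ} (hf : HasDerivAt f f' u₃)
    (h : σr u₁ u₃ ≠ 0) :
    deriv (fun y => f y / σr u₁ y ^ 2) u₃ =
      (f' * σr u₁ u₃ + 2 * f u₃) / σr u₁ u₃ ^ 3 := by
  rw [(hf.fun_div (hasDerivAt_σr_snd.fun_pow 2) (pow_ne_zero 2 h)).deriv]
  field_simp
  ring

theorem P113_eq (h : σr u₁ u₃ ≠ 0) :
    P113 u₁ u₃ = (2 * u₁ * σr u₁ u₃ + 2 * (u₁ ^ 4 / 3 + 2 * u₁ * u₃)) / σr u₁ u₃ ^ 3 := by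
  have hnum : HasDerivAt (fun y => u₁ ^ 4 / 3 + 2 * u₁ * y) (2 * u₁) u₃ := by
    simpa using ((hasDerivAt_id u₃).const_mul (2 * u₁)).const_add (u₁ ^ 4 / 3)
  exact deriv_div_σr_sq_snd hnum h

theorem P133_eq (h : σr u₁ u₃ ≠ 0) : P133 u₁ u₃ = -2 * u₁ ^ 2 / σr u₁ u₃ ^ 3 :=
  (deriv_div_σr_sq_snd (hasDerivAt_const u₃ (-u₁ ^ 2)) h).trans (by ring)

theorem P333_eq (h : σr u₁ u₃ ≠ 0) : P333 u₁ u₃ = 2 / σr u₁ u₃ ^ 3 :=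
  (deriv_div_σr_sq_snd (hasDerivAt_const u₃ 1) h).trans (by ring)

theorem Φ_eq (h : σr u₁ u₃ ≠ 0) : Φ u₁ u₃ = 2 * (u₁ ^ 3 + σr u₁ u₃) / σr u₁ u₃ ^ 4 := by
  rw [Φ, P11, P13, P113_eq h, P133_eq h, P333_eq h]
  field_simp
  unfold σr
  ring

theorem Φ1_eq (h : σr u₁ u₃ ≠ 0) : Φ1 u₁ u₃ = -8 * u₁ ^ 5 / σr u₁ u₃ ^ 5 := by
  have hΦ : (fun x => 2 * (x ^ 3 + σr x u₃) / σr x u₃ ^ 4) =ᶠ[𝓝 u₁] fun x => Φ x u₃ := by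
    filter_upwards [eventually_σr_ne_zero_fst h] with x hx
    rw [Φ_eq hx]
  have hnum := ((hasDerivAt_pow 3 u₁).fun_add (hasDerivAt_σr_fst (u₃ := u₃))).const_mul 2
  have hder := (hnum.fun_div (hasDerivAt_σr_fst.fun_pow 4) (pow_ne_zero 4 h)).congr_of_eventuallyEq
    hΦ.symm
  rw [Φ1, hder.deriv]
  field_simp
  ring

theorem Φ11_eq (h : σr u₁ u₃ ≠ 0) :
    Φ11 u₁ u₃ = 40 * u₁ ^ 4 * (u₁ ^ 3 - σr u₁ u₃) / σr u₁ u₃ ^ 6 := by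
  have hΦ1 : (fun x => -8 * x ^ 5 / σr x u₃ ^ 5) =ᶠ[𝓝 u₁] fun x => Φ1 x u₃ := by
    filter_upwards [eventually_σr_ne_zero_fst h] with x hx
    rw [Φ1_eq hx]
  have hnum := (hasDerivAt_pow 5 u₁).const_mul (-8)
  have hder := (hnum.fun_div (hasDerivAt_σr_fst.fun_pow 5) (pow_ne_zero 5 h)).congr_of_eventuallyEq
    hΦ1.symm
  rw [Φ11, hder.deriv]
  field_simp
  ring

end ClosedForms

theorem stmt_15 (u₁ u₃ : ℂ) (h : σr u₁ u₃ ≠ 0)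
    (h2 : σr (2 * u₁) (2 * u₃) ≠ 0) (hφ : Φ u₁ u₃ ≠ 0) :
    P11 (2 * u₁) (2 * u₃) =
      P11 u₁ u₃ +
        ((Φ1 u₁ u₃) ^ 2 - Φ u₁ u₃ * Φ11 u₁ u₃) / (4 * (Φ u₁ u₃) ^ 2) := by
  have hφ_num : u₁ ^ 3 + σr u₁ u₃ ≠ 0 := by
    rw [Φ_eq h] at hφ
    exact fun h0 => hφ (by rw [h0]; ring)
  rw [P11, P11, Φ_eq h, Φ1_eq h, Φ11_eq h]
  field_simp
  unfold σr
  ring
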